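/- The nrDFAwtl A = (Q, {a,b,c}, ◁, τ, {q₀}, δ) with Q = {q₀, q₁, q₂, q₃, q₄, q₅}, τ(q₀) = {b}, τ(q₁) = {c}, τ(q₂) = {c}, τ(q₃) = ∅, τ(q₄) = {a}, τ(q₅) = ∅, and transitions δ(q₀,a) = q₁, δ(q₂,b) = q₃, δ(q₄,c) = q₅, δ(q₁,◁) = q₂, δ(q₃,◁) = q₄, δ(q₅,◁) = Accept (all other transitions undefined) accepts the empty language: L(A) = ∅. -/

import Mathlib

/-- The end-of-tape behaviour of a non-returning automaton with translucent
letters: either a set of states to continue with (the empty set meaning that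
the transition is undefined), or the operation `Accept`. -/
inductive EndMove (Q : Type) where
  | cont : Set Q → EndMove Q
  | accept : EndMove Q

/-- A nondeterministic finite automaton with translucent letters (NFAwtl).
`τ q` is the set of letters that are translucent for state `q`. -/
structure NFAwtl (Q : Type) (A : Type) where
  τ : Q → Set A
  I : Set Q
  F : Set Q
  δ : Q → A → Set Q
  tr_compat : ∀ q a, a ∈ τ q → δ q a = ∅

namespace NFAwtl

variable {Q A : Type}

/-- A single computation step of an NFAwtl: the first letter (from the left)
that is not translucent for the current state is read and deleted. -/
inductive Step (M : NFAwtl Q A) : Q × List A → Q × List A → Prop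
  | read (q q' : Q) (u v : List A) (a : A) :
      (∀ b ∈ u, b ∈ M.τ q) → a ∉ M.τ q → q' ∈ M.δ q a →
      Step M (q, u ++ a :: v) (q', u ++ v)

/-- The language accepted by an NFAwtl: words from which some computation
reaches a configuration whose remaining tape contents is translucent for a
final state. -/
def lang (M : NFAwtl Q A) : Set (List A) :=
  { w | ∃ q₀ ∈ M.I, ∃ q w', Relation.ReflTransGen (Step M) (q₀, w) (q, w') ∧
        (∀ b ∈ w', b ∈ M.τ q) ∧ q ∈ M.F }

/-- An NFAwtl is deterministic (a DFAwtl) if it has a single initial state and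
at most one transition for each state/letter pair. -/
def IsDet (M : NFAwtl Q A) : Prop :=
  (∃ q, M.I = {q}) ∧ ∀ q a, (M.δ q a).Subsingleton

end NFAwtl

/-- A configuration of a non-returning automaton with translucent letters:
`conf x q w` means the tape contains `x ++ w` followed by the end-of-tape
marker, the current state is `q`, and the head is positioned at the first
letter of `w`; `accept` is the accepting halting configuration. -/
inductive NrConf (Q : Type) (A : Type) where
  | conf : List A → Q → List A → NrConf Q A
  | accept : NrConf Q A

/-- A non-returning nondeterministic finite automaton with translucent
letters (nrNFAwtl). -/
structure NrNFAwtl (Q : Type) (A : Type) where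
  τ : Q → Set A
  I : Set Q
  δ : Q → A → Set Q
  δend : Q → EndMove Q
  tr_compat : ∀ q a, a ∈ τ q → δ q a = ∅

namespace NrNFAwtl

variable {Q A : Type}

/-- A single computation step of an nrNFAwtl. -/
inductive Step (M : NrNFAwtl Q A) : NrConf Q A → NrConf Q A → Prop
  | read (x : List A) (q q' : Q) (u v : List A) (a : A) :
      (∀ b ∈ u, b ∈ M.τ q) → a ∉ M.τ q → q' ∈ M.δ q a →
      Step M (.conf x q (u ++ a :: v)) (.conf (x ++ u) q' v)
  | restart (x w : List A) (q q' : Q) (S : Set Q) :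
      (∀ b ∈ w, b ∈ M.τ q) → M.δend q = .cont S → q' ∈ S →
      Step M (.conf x q w) (.conf [] q' (x ++ w))
  | accept (x w : List A) (q : Q) :
      (∀ b ∈ w, b ∈ M.τ q) → M.δend q = .accept →
      Step M (.conf x q w) .accept

/-- The language accepted by an nrNFAwtl. -/
def lang (M : NrNFAwtl Q A) : Set (List A) :=
  { w | ∃ q₀ ∈ M.I, Relation.ReflTransGen (Step M) (.conf [] q₀ w) .accept }

/-- An nrNFAwtl is deterministic (an nrDFAwtl) if it has a single initial
state and, for every state and every letter (including the end-of-tape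
marker), at most one transition is available. -/
def IsDet (M : NrNFAwtl Q A) : Prop :=
  (∃ q, M.I = {q}) ∧ (∀ q a, (M.δ q a).Subsingleton) ∧
  (∀ q S, M.δend q = .cont S → S.Subsingleton)

end NrNFAwtl

/-- `L` is accepted by some NFAwtl. -/
def AcceptedByNFAwtl {A : Type} [Fintype A] (L : Set (List A)) : Prop :=
  ∃ (Q : Type) (_ : Fintype Q) (M : NFAwtl Q A), M.lang = L

/-- `L` is accepted by some DFAwtl. -/
def AcceptedByDFAwtl {A : Type} [Fintype A] (L : Set (List A)) : Prop :=
  ∃ (Q : Type) (_ : Fintype Q) (M : NFAwtl Q A), M.IsDet ∧ M.lang = L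

/-- `L` is accepted by some nrNFAwtl. -/
def AcceptedByNrNFAwtl {A : Type} [Fintype A] (L : Set (List A)) : Prop :=
  ∃ (Q : Type) (_ : Fintype Q) (M : NrNFAwtl Q A), M.lang = L

/-- `L` is accepted by some nrDFAwtl. -/
def AcceptedByNrDFAwtl {A : Type} [Fintype A] (L : Set (List A)) : Prop :=
  ∃ (Q : Type) (_ : Fintype Q) (M : NrNFAwtl Q A), M.IsDet ∧ M.lang = L

/-- The three-letter alphabet `{a, b, c}`. -/
inductive Γ3 : Type
  | a | b | c
deriving DecidableEq

instance : Fintype Γ3 where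
  elems := {Γ3.a, Γ3.b, Γ3.c}
  complete := by intro x; cases x <;> simp

/-- The state set of the nrDFAwtl from Example "Emptiness". -/
inductive StEmp : Type
  | q0 | q1 | q2 | q3 | q4 | q5
deriving DecidableEq

instance : Fintype StEmp where
  elems := {StEmp.q0, StEmp.q1, StEmp.q2, StEmp.q3, StEmp.q4, StEmp.q5}
  complete := by intro x; cases x <;> simp

/-- Its translucency mapping. -/
def τEmp : StEmp → Set Γ3
  | .q0 => {Γ3.b}
  | .q1 => {Γ3.c}
  | .q2 => {Γ3.c}
  | .q3 => ∅
  | .q4 => {Γ3.a}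
  | .q5 => ∅

/-- Its letter transitions. -/
def δEmp : StEmp → Γ3 → Set StEmp
  | .q0, .a => {StEmp.q1}
  | .q2, .b => {StEmp.q3}
  | .q4, .c => {StEmp.q5}
  | _, _ => ∅

/-- Its end-of-tape transitions. -/
def δendEmp : StEmp → EndMove StEmp
  | .q1 => .cont {StEmp.q2}
  | .q3 => .cont {StEmp.q4}
  | .q5 => .accept
  | _ => .cont ∅

/-- The nrDFAwtl from the emptiness example. -/
def Aemp : NrNFAwtl StEmp Γ3 where
  τ := τEmp
  I := {StEmp.q0}
  δ := δEmp
  δend := δendEmp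
  tr_compat := by
    intro q x h
    cases q <;> cases x <;> simp_all [τEmp, δEmp]


/-- `w` consists of `b`s followed by `c`s. -/
def BCword (w : List Γ3) : Prop :=
  ∃ u v, w = u ++ v ∧ (∀ l ∈ u, l = Γ3.b) ∧ (∀ l ∈ v, l = Γ3.c)

/-- An invariant satisfied by all configurations reachable from an initial one. -/
def InvEmp : NrConf StEmp Γ3 → Prop
  | .conf x q w =>
      match q with
      | .q0 => x = []
      | .q1 => ∀ l ∈ x, l = Γ3.b
      | .q2 => x = [] ∧ BCword w
      | .q3 => x = [] ∧ BCword w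
      | .q4 => x = [] ∧ w = []
      | .q5 => False
  | .accept => False

lemma bc_cons_b {u v : List Γ3} (hu : ∀ l ∈ u, l = Γ3.c)
    (h : BCword (u ++ Γ3.b :: v)) : u = [] ∧ BCword v := by
  obtain ⟨p, s, heq, hp, hs⟩ := h
  have hu0 : u = [] := by
    cases u with
    | nil => rfl
    | cons l u' =>
      have hl : l = Γ3.c := hu l (by simp)
      cases p with
      | nil =>
        have : l ∈ s := by
          have := heq ▸ (List.mem_append.mpr (Or.inl (by simp)) :
            l ∈ (l :: u') ++ Γ3.b :: v)
          simpa using this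
        have hb : Γ3.b ∈ s := by
          have : Γ3.b ∈ (l :: u') ++ Γ3.b :: v := by simp
          rw [heq] at this; simpa using this
        exact absurd (hs _ hb) (by simp)
      | cons m p' =>
        have : l = m := by
          have := heq
          simp only [List.cons_append] at this
          exact (List.cons.injEq _ _ _ _ ▸ this).1
        have hm : m = Γ3.b := hp m (by simp)
        rw [hl, hm] at this
        simp at this
  subst hu0
  simp only [List.nil_append] at heq
  cases p with
  | nil =>
    simp only [List.nil_append] at heq
    have : Γ3.b ∈ s := by rw [← heq]; simp
    exact absurd (hs _ this) (by simp)
  | cons m p' =>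
    simp only [List.cons_append, List.cons.injEq] at heq
    exact ⟨rfl, p', s, heq.2, fun l hl => hp l (by simp [hl]), hs⟩

lemma invEmp_step {c d : NrConf StEmp Γ3} (h : Aemp.Step c d) (hc : InvEmp c) :
    InvEmp d := by
  cases h with
  | read x q q' u v a hu ha hq' =>
    cases q with
    | q0 =>
      cases a with
      | a =>
        have : q' = StEmp.q1 := by simpa [Aemp, δEmp] using hq'
        subst this
        have hx : x = [] := hc
        subst hx
        intro l hl
        simp only [List.nil_append] at hl
        have := hu l hl
        simpa [Aemp, τEmp] using this
      | b => simp [Aemp, δEmp] at hq'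
      | c => simp [Aemp, δEmp] at hq'
    | q1 => cases a <;> simp [Aemp, δEmp] at hq'
    | q2 =>
      cases a with
      | a => simp [Aemp, δEmp] at hq'
      | b =>
        have : q' = StEmp.q3 := by simpa [Aemp, δEmp] using hq'
        subst this
        obtain ⟨hx, hbc⟩ := hc
        subst hx
        have hu' : ∀ l ∈ u, l = Γ3.c := by
          intro l hl; simpa [Aemp, τEmp] using hu l hl
        obtain ⟨hu0, hbcv⟩ := bc_cons_b hu' hbc
        subst hu0
        exact ⟨rfl, hbcv⟩
      | c => simp [Aemp, δEmp] at hq'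
    | q3 => cases a <;> simp [Aemp, δEmp] at hq'
    | q4 =>
      obtain ⟨hx, hw⟩ := hc
      exact absurd hw (by simp)
    | q5 => exact hc.elim
  | restart x w q q' S hw hS hq' =>
    cases q with
    | q0 => rw [show Aemp.δend StEmp.q0 = .cont ∅ from rfl] at hS
            cases hS; exact hq'.elim
    | q1 =>
      rw [show Aemp.δend StEmp.q1 = .cont {StEmp.q2} from rfl] at hS
      cases hS
      have : q' = StEmp.q2 := hq'
      subst this
      refine ⟨rfl, x, w, rfl, hc, ?_⟩
      intro l hl; simpa [Aemp, τEmp] using hw l hl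
    | q2 => rw [show Aemp.δend StEmp.q2 = .cont ∅ from rfl] at hS
            cases hS; exact hq'.elim
    | q3 =>
      rw [show Aemp.δend StEmp.q3 = .cont {StEmp.q4} from rfl] at hS
      cases hS
      have : q' = StEmp.q4 := hq'
      subst this
      obtain ⟨hx, _⟩ := hc
      subst hx
      have hw0 : w = [] := by
        cases w with
        | nil => rfl
        | cons l w' => exact absurd (hw l (by simp)) (by simp [Aemp, τEmp])
      subst hw0
      exact ⟨rfl, rfl⟩
    | q4 => rw [show Aemp.δend StEmp.q4 = .cont ∅ from rfl] at hS
            cases hS; exact hq'.elim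
    | q5 => exact hc.elim
  | accept x w q hw hq =>
    cases q with
    | q5 => exact hc.elim
    | q0 => exact absurd hq (by simp [Aemp, δendEmp])
    | q1 => exact absurd hq (by simp [Aemp, δendEmp])
    | q2 => exact absurd hq (by simp [Aemp, δendEmp])
    | q3 => exact absurd hq (by simp [Aemp, δendEmp])
    | q4 => exact absurd hq (by simp [Aemp, δendEmp])

lemma invEmp_rtg {c d : NrConf StEmp Γ3}
    (h : Relation.ReflTransGen Aemp.Step c d) (hc : InvEmp c) : InvEmp d := by
  induction h with
  | refl => exact hc
  | tail _ hstep ih => exact invEmp_step hstep ih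

/-- The nrDFAwtl `Aemp` accepts the empty language. -/
theorem Aemp_lang_empty : Aemp.lang = ∅ := by
  ext w
  simp only [Set.mem_empty_iff_false, iff_false]
  rintro ⟨q0, hq0, hrt⟩
  have hq : q0 = StEmp.q0 := by simpa [Aemp] using hq0
  subst hq
  have : InvEmp (NrConf.accept) := invEmp_rtg hrt (by simp [InvEmp])
  exact this
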